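/- arXiv:1701.08504 — 3 statements merged into one kernel-verified Lean document; each statement's English description precedes it below -/
import Mathlib

section
/- Let f : ℕ → ℕ be a multiplicative function (f(1) = 1 and f(ab) = f(a)f(b) whenever gcd(a,b) = 1) satisfying f(p^{k-1}) ≤ f(p^k) for every prime p and integer k ≥ 1. Then every positive integer n is f-practical if and only if f(p^k) ≤ S_f(p^{k-1}) + 1 holds for every prime p and every integer k ≥ 1. -/
/-!
Necessity: if `f(p ^ k) > S_f(p ^ (k - 1)) + 1`, then `S_f(p ^ (k - 1)) + 1 ≤ S_f(p ^ k)` is not a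
sum over divisors of `p ^ k`: a set containing `p ^ k` sums to more, one avoiding it to at most
`S_f(p ^ (k - 1))`.

Sufficiency, by induction over prime powers: let `n` be `f`-practical and `p ∤ n`. The condition
makes `f(1), f(p), …, f(p ^ k)` a greedy numeration system, so every
`m ≤ S_f(p ^ k n) = S_f(n) · ∑_{i ≤ k} f(p ^ i)` is `∑ c_i f(p ^ i)` with digits `c_i ≤ S_f(n)`.
Each digit is a sum `∑_{d ∈ D_i} f(d)` over divisors of `n`, and the divisors `p ^ i d` are pairwise
distinct with `f(p ^ i d) = f(p ^ i) f(d)`.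
-/

open Finset

def Sf (f : ℕ → ℕ) (n : ℕ) : ℕ := ∑ d ∈ n.divisors, f d

def FPractical (f : ℕ → ℕ) (n : ℕ) : Prop :=
  0 < n ∧ ∀ m : ℕ, 0 < m → m ≤ Sf f n →
    ∃ D : Finset ℕ, D ⊆ n.divisors ∧ m = ∑ d ∈ D, f d

def WeaklyFPractical (f : ℕ → ℕ) (n : ℕ) : Prop :=
  0 < n ∧ ∃ l : List ℕ,
    l.Nodup ∧
    l.toFinset = n.primeFactors ∧
    l.Pairwise (fun p q => f p ≤ f q) ∧
    ∀ i : Fin l.length,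
      f (l.get i) ≤ Sf f (((l.take i).map fun p => p ^ n.factorization p).prod) + 1

theorem sf_prime_pow (f : ℕ → ℕ) {p : ℕ} (hp : p.Prime) (k : ℕ) :
    Sf f (p ^ k) = ∑ i ∈ range (k + 1), f (p ^ i) :=
  Nat.sum_divisors_prime_pow hp

theorem sf_mul_of_coprime {f : ℕ → ℕ} (hf1 : f 1 = 1)
    (hmul : ∀ a b : ℕ, Nat.Coprime a b → f (a * b) = f a * f b) {a b : ℕ}
    (hab : Nat.Coprime a b) : Sf f (a * b) = Sf f a * Sf f b := by
  let F : ArithmeticFunction ℕ := ⟨fun n => if n = 0 then 0 else f n, rfl⟩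
  have hF : ∀ {n}, n ≠ 0 → F n = f n := fun hn => if_neg hn
  have hFmul : F.IsMultiplicative :=
    ArithmeticFunction.IsMultiplicative.iff_ne_zero.2
      ⟨hF one_ne_zero ▸ hf1, fun hm hn hmn => by
        rw [hF (mul_ne_zero hm hn), hF hm, hF hn, hmul _ _ hmn]⟩
  have hSf : ∀ n, Sf f n = (ArithmeticFunction.zeta * F) n := fun n => by
    rw [ArithmeticFunction.zeta_mul_apply]
    exact sum_congr rfl fun d hd => (hF ((Nat.pos_of_mem_divisors hd).ne')).symm
  rw [hSf, hSf, hSf, (ArithmeticFunction.isMultiplicative_zeta.mul hFmul).map_mul_of_coprime hab]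

-- Greedy: the top digit is `min N (m / g (k - 1))`; the remainder fits by the hypothesis on `g`.
theorem exists_digits_of_le_mul_sum {g : ℕ → ℕ} {N k m : ℕ}
    (hg : ∀ j < k, g j ≤ ∑ i ∈ range j, g i + 1) (hm : m ≤ N * ∑ i ∈ range k, g i) :
    ∃ c : ℕ → ℕ, (∀ i, c i ≤ N) ∧ m = ∑ i ∈ range k, c i * g i := by
  induction k generalizing m with
  | zero => exact ⟨0, fun _ => Nat.zero_le N, by simpa using hm⟩
  | succ k ih =>
    set q := min N (m / g k) with hq
    have hqm : q * g k ≤ m :=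
      (Nat.mul_le_mul_right _ (min_le_right _ _)).trans (Nat.div_mul_le_self _ _)
    have hrest : m - q * g k ≤ N * ∑ i ∈ range k, g i := by
      rw [sum_range_succ, mul_add] at hm
      rcases le_or_gt N (m / g k) with hN | hN
      · rw [show q = N from min_eq_left hN]
        omega
      · rw [hq, min_eq_right hN.le, ← Nat.mod_eq_sub_div_mul]
        rcases (g k).eq_zero_or_pos with hgk | hgk
        · simpa [hgk] using hm
        · have := Nat.mod_lt m hgk
          have := hg k k.lt_succ_self
          have := Nat.le_mul_of_pos_left (∑ i ∈ range k, g i) (Nat.zero_lt_of_lt hN)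
          omega
    obtain ⟨c, hcN, hc⟩ := ih (fun j hj => hg j (by omega)) hrest
    refine ⟨Function.update c k q, fun i => ?_, ?_⟩
    · rcases eq_or_ne i k with rfl | hi
      · simp [q]
      · simpa [hi] using hcN i
    · rw [sum_range_succ, Function.update_self,
        sum_congr rfl fun i hi => by rw [Function.update_of_ne (mem_range.1 hi).ne], ← hc]
      omega

theorem le_sum_range_add_one_of_forall_eq_sum {g : ℕ → ℕ} {k : ℕ}
    (h : ∀ m, 0 < m → m ≤ ∑ i ∈ range (k + 1), g i → ∃ I ⊆ range (k + 1), m = ∑ i ∈ I, g i) :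
    g k ≤ ∑ i ∈ range k, g i + 1 := by
  by_contra! hlt
  obtain ⟨I, hI, hsum⟩ := h (∑ i ∈ range k, g i + 1) (Nat.succ_pos _)
    (by rw [sum_range_succ]; omega)
  by_cases hk : k ∈ I
  · have := single_le_sum (fun i _ => Nat.zero_le (g i)) hk
    omega
  · have hIk : I ⊆ range k := fun i hi => mem_range.2 <|
      lt_of_le_of_ne (Nat.lt_succ_iff.1 (mem_range.1 (hI hi))) (by rintro rfl; exact hk hi)
    have := sum_le_sum_of_subset hIk (f := g)
    omega

theorem FPractical.exists_subset_range_of_prime_pow {f : ℕ → ℕ} {p k m : ℕ} (hp : p.Prime)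
    (h : FPractical f (p ^ k)) (hm0 : 0 < m) (hm : m ≤ ∑ i ∈ range (k + 1), f (p ^ i)) :
    ∃ I ⊆ range (k + 1), m = ∑ i ∈ I, f (p ^ i) := by
  obtain ⟨D, hD, rfl⟩ := h.2 m hm0 (by rwa [sf_prime_pow f hp])
  rw [Nat.divisors_prime_pow hp, subset_map_iff] at hD
  obtain ⟨I, hI, rfl⟩ := hD
  exact ⟨I, hI, sum_map _ _ _⟩

theorem FPractical.prime_pow_succ_le {f : ℕ → ℕ} {p k : ℕ} (hp : p.Prime)
    (h : FPractical f (p ^ (k + 1))) : f (p ^ (k + 1)) ≤ Sf f (p ^ k) + 1 := by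
  rw [sf_prime_pow f hp]
  exact le_sum_range_add_one_of_forall_eq_sum (g := fun i => f (p ^ i)) fun _ hm0 hm =>
    h.exists_subset_range_of_prime_pow hp hm0 hm

theorem fPractical_one {f : ℕ → ℕ} (hf1 : f 1 = 1) : FPractical f 1 :=
  ⟨one_pos, fun m hm0 hm => ⟨{1}, by simp, by
    simp only [Sf, Nat.divisors_one, sum_singleton, hf1] at hm ⊢
    omega⟩⟩

theorem FPractical.exists_subset_of_le {f : ℕ → ℕ} {n m : ℕ} (h : FPractical f n)
    (hm : m ≤ Sf f n) : ∃ D ⊆ n.divisors, m = ∑ d ∈ D, f d := by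
  rcases m.eq_zero_or_pos with rfl | hm0
  · exact ⟨∅, empty_subset _, sum_empty.symm⟩
  · exact h.2 m hm0 hm

theorem Nat.Prime.eq_of_pow_mul_eq_pow_mul {p i j d e : ℕ} (hp : p.Prime) (hd : ¬p ∣ d)
    (he : ¬p ∣ e) (h : p ^ i * d = p ^ j * e) : i = j ∧ d = e := by
  have hd0 : d ≠ 0 := by rintro rfl; exact hd (dvd_zero p)
  have he0 : e ≠ 0 := by rintro rfl; exact he (dvd_zero p)
  have hij : i = j := by
    simpa [Nat.factorization_mul, hd0, he0, hp.ne_zero, hp.factorization_self,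
      Nat.factorization_eq_zero_of_not_dvd hd, Nat.factorization_eq_zero_of_not_dvd he]
      using congrArg (·.factorization p) h
  subst hij
  exact ⟨rfl, Nat.eq_of_mul_eq_mul_left (pow_pos hp.pos i) h⟩

theorem sum_image_sigma_pow_mul {f : ℕ → ℕ}
    (hmul : ∀ a b : ℕ, Nat.Coprime a b → f (a * b) = f a * f b) {p n : ℕ} (hp : p.Prime)
    (hpn : ¬p ∣ n) (s : Finset ℕ) {D : ℕ → Finset ℕ} (hD : ∀ i, D i ⊆ n.divisors) :
    ∑ x ∈ (s.sigma D).image (fun x => p ^ x.1 * x.2), f x =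
      ∑ i ∈ s, f (p ^ i) * ∑ d ∈ D i, f d := by
  have hpd : ∀ i, ∀ d ∈ D i, ¬p ∣ d := fun i d hd hpd =>
    hpn (hpd.trans (Nat.dvd_of_mem_divisors (hD i hd)))
  rw [sum_image, sum_sigma]
  · exact sum_congr rfl fun i _ => by
      rw [mul_sum]
      exact sum_congr rfl fun d hd =>
        hmul _ _ (Nat.Coprime.pow_left i ((hp.coprime_iff_not_dvd).2 (hpd i d hd)))
  · rintro ⟨i, d⟩ hx ⟨j, e⟩ hy h
    rw [coe_sigma, Set.mem_sigma_iff] at hx hy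
    obtain ⟨rfl, rfl⟩ := hp.eq_of_pow_mul_eq_pow_mul (hpd i d hx.2) (hpd j e hy.2) h
    rfl

theorem FPractical.prime_pow_mul {f : ℕ → ℕ} (hf1 : f 1 = 1)
    (hmul : ∀ a b : ℕ, Nat.Coprime a b → f (a * b) = f a * f b) {p n : ℕ} (hp : p.Prime)
    (hpn : ¬p ∣ n) (hg : ∀ j, f (p ^ j) ≤ ∑ i ∈ range j, f (p ^ i) + 1)
    (h : FPractical f n) (k : ℕ) : FPractical f (p ^ k * n) := by
  refine ⟨mul_pos (pow_pos hp.pos k) h.1, fun m _ hm => ?_⟩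
  rw [sf_mul_of_coprime hf1 hmul (Nat.Coprime.pow_left k (hp.coprime_iff_not_dvd.2 hpn)),
    sf_prime_pow f hp, mul_comm] at hm
  obtain ⟨c, hcN, rfl⟩ := exists_digits_of_le_mul_sum (fun j _ => hg j) hm
  choose D hD hc using fun i => h.exists_subset_of_le (hcN i)
  refine ⟨((range (k + 1)).sigma D).image (fun x => p ^ x.1 * x.2), fun x hx => ?_, ?_⟩
  · obtain ⟨⟨i, d⟩, hid, rfl⟩ := mem_image.1 hx
    rw [mem_sigma, mem_range] at hid
    exact Nat.mem_divisors.2 ⟨mul_dvd_mul (pow_dvd_pow p (by omega))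
      (Nat.dvd_of_mem_divisors (hD i hid.2)), (mul_pos (pow_pos hp.pos k) h.1).ne'⟩
  · rw [sum_image_sigma_pow_mul hmul hp hpn _ hD]
    exact sum_congr rfl fun i _ => by rw [hc i, mul_comm]

theorem stmt5_general (f : ℕ → ℕ) (hf1 : f 1 = 1)
    (hmul : ∀ a b : ℕ, Nat.Coprime a b → f (a * b) = f a * f b) :
    (∀ n : ℕ, 0 < n → FPractical f n) ↔
      ∀ p k : ℕ, p.Prime → 1 ≤ k → f (p ^ k) ≤ Sf f (p ^ (k - 1)) + 1 := by
  constructor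
  · intro h p k hp hk
    obtain ⟨k, rfl⟩ := Nat.exists_eq_add_of_le' hk
    exact (h _ (pow_pos hp.pos _)).prime_pow_succ_le hp
  · intro hcond n hn
    have hg : ∀ p, p.Prime → ∀ j, f (p ^ j) ≤ ∑ i ∈ range j, f (p ^ i) + 1 := by
      rintro p hp (_ | j)
      · simp [hf1]
      · simpa [sf_prime_pow f hp] using hcond p (j + 1) hp (Nat.succ_pos j)
    induction n using Nat.recOnPrimePow with
    | zero => exact absurd hn (lt_irrefl 0)
    | one => exact fPractical_one hf1
    | prime_pow_mul a p k hp hpa _ ih =>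
      exact (ih (Nat.pos_of_ne_zero (by rintro rfl; exact hpa (dvd_zero p)))).prime_pow_mul
        hf1 hmul hp hpa (hg p hp) k

/-- Every positive integer is f-practical iff f(p^k) ≤ S_f(p^(k-1)) + 1 for every
prime p and integer k ≥ 1. -/
theorem stmt5 (f : ℕ → ℕ) (hf1 : f 1 = 1)
    (hmul : ∀ a b : ℕ, Nat.Coprime a b → f (a * b) = f a * f b)
    (hmono : ∀ p k : ℕ, p.Prime → 1 ≤ k → f (p ^ (k - 1)) ≤ f (p ^ k)) :
    (∀ n : ℕ, 0 < n → FPractical f n) ↔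
      ∀ p k : ℕ, p.Prime → 1 ≤ k → f (p ^ k) ≤ Sf f (p ^ (k - 1)) + 1 :=
  stmt5_general f hf1 hmul
end

section
/- Let f : ℕ → ℕ be a multiplicative function (f(1) = 1 and f(ab) = f(a)f(b) whenever gcd(a,b) = 1) satisfying f(p^{k-1}) ≤ f(p^k) for every prime p and integer k ≥ 1. Then f is convenient if and only if for every prime p and every f-practical positive integer m coprime to p, the inequality f(p) ≤ S_f(m) + 1 implies f(p^{k+1}) ≤ S_f(mp^k) + 1 for every integer k ≥ 0. -/
open Finset

/-- f is convenient if every weakly f-practical number is f-practical. -/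
def Convenient (f : ℕ → ℕ) : Prop :=
  ∀ n : ℕ, WeaklyFPractical f n → FPractical f n

/-!
Write `S` for `Sf f`. If `m` is `f`-practical, `p ∤ m` and `f (p ^ (e + 1)) ≤ S (m * p ^ e) + 1`,
then every `t ≤ S (m * p ^ (e + 1)) = S (m * p ^ e) + S m * f (p ^ (e + 1))` is of the form
`r + v * f (p ^ (e + 1))` with `r ≤ S (m * p ^ e)` and `v ≤ S m`, so `m * p ^ (e + 1)` is
`f`-practical: take the divisors representing `r`, and `p ^ (e + 1)` times those representing `v`.
Under the condition of the theorem, adding the prime powers of a weakly `f`-practical number one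
at a time, in the given order, therefore keeps the product `f`-practical.

Conversely, every multiple `n` of an `f`-practical `m` with `f q ≤ S m + 1` for all primes `q ∣ n`
is weakly `f`-practical: if `S P + 1 < f q` for a prefix product `P` of the sorted factorization,
then each divisor of `m` not dividing `P` has a prime outside the prefix, hence an `f`-value above
`S P + 1`; so `S P + 1` is not a sum of values at divisors of `m`, i.e. `S m ≤ S P`, contradicting
`f q ≤ S m + 1`. For `n = m * p ^ (k + 1)` with `f (p ^ (k + 1)) > S (m * p ^ k) + 1` the same
reasoning shows that `S (m * p ^ k) + 1` is not a sum of values at divisors of `n`, so `n` is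
weakly `f`-practical but not `f`-practical.
-/

section

variable {f : ℕ → ℕ}

structure IsPowMonoMultiplicative (f : ℕ → ℕ) : Prop where
  map_one : f 1 = 1
  map_mul_of_coprime : ∀ {a b : ℕ}, a.Coprime b → f (a * b) = f a * f b
  monotone_pow : ∀ {p : ℕ}, p.Prime → Monotone fun k => f (p ^ k)

namespace IsPowMonoMultiplicative

theorem pos_pow (hf : IsPowMonoMultiplicative f) {p : ℕ} (hp : p.Prime) (k : ℕ) :
    0 < f (p ^ k) := by
  have h := hf.monotone_pow hp k.zero_le
  simp only [pow_zero, hf.map_one] at h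
  exact h

theorem pos (hf : IsPowMonoMultiplicative f) {n : ℕ} (hn : n ≠ 0) : 0 < f n := by
  rw [Nat.multiplicative_factorization f (fun _ _ => hf.map_mul_of_coprime) hf.map_one hn]
  exact Finset.prod_pos fun p hp => hf.pos_pow (Nat.prime_of_mem_primeFactors hp) _

theorem pow_le_of_pow_dvd (hf : IsPowMonoMultiplicative f) {p a d : ℕ} (hp : p.Prime)
    (hd : d ≠ 0) (hpd : p ^ a ∣ d) : f (p ^ a) ≤ f d := by
  rw [← Nat.ordProj_mul_ordCompl_eq_self d p,
    hf.map_mul_of_coprime ((Nat.coprime_ordCompl hp hd).pow_left _)]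
  calc f (p ^ a) ≤ f (p ^ d.factorization p) :=
        hf.monotone_pow hp ((hp.pow_dvd_iff_le_factorization hd).1 hpd)
    _ ≤ _ := Nat.le_mul_of_pos_right _ (hf.pos (Nat.ordCompl_pos p hd).ne')

theorem le_of_dvd (hf : IsPowMonoMultiplicative f) {p d : ℕ} (hp : p.Prime) (hd : d ≠ 0)
    (hpd : p ∣ d) : f p ≤ f d := by
  simpa using hf.pow_le_of_pow_dvd hp hd (a := 1) (by simpa using hpd)

end IsPowMonoMultiplicative

theorem Sf_le_Sf_of_dvd {a b : ℕ} (hab : a ∣ b) (hb : b ≠ 0) : Sf f a ≤ Sf f b :=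
  Finset.sum_le_sum_of_subset (Nat.divisors_subset_of_dvd hb hab)

theorem le_Sf_of_dvd {d n : ℕ} (hdn : d ∣ n) (hn : n ≠ 0) : f d ≤ Sf f n :=
  Finset.single_le_sum (fun _ _ => Nat.zero_le _) (Nat.mem_divisors.2 ⟨hdn, hn⟩)

theorem Sf_mul (hmul : ∀ {a b : ℕ}, a.Coprime b → f (a * b) = f a * f b) {a b : ℕ}
    (hab : a.Coprime b) : Sf f (a * b) = Sf f a * Sf f b := by
  rw [Sf, Sf, Sf, Nat.divisors_mul, Finset.mul_def, Finset.sum_image hab.mul_injOn_divisors,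
    Finset.sum_mul_sum, Finset.sum_product]
  refine Finset.sum_congr rfl fun x hx => Finset.sum_congr rfl fun y hy => hmul ?_
  exact hab.coprime_dvd_left (Nat.dvd_of_mem_divisors hx) |>.coprime_dvd_right
    (Nat.dvd_of_mem_divisors hy)

theorem Sf_mul_pow_succ (hmul : ∀ {a b : ℕ}, a.Coprime b → f (a * b) = f a * f b) {p m : ℕ}
    (hp : p.Prime) (hpm : p.Coprime m) (k : ℕ) :
    Sf f (m * p ^ (k + 1)) = Sf f (m * p ^ k) + Sf f m * f (p ^ (k + 1)) := by
  rw [Sf_mul hmul (hpm.symm.pow_right _), Sf_mul hmul (hpm.symm.pow_right _)]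
  simp only [Sf, Nat.sum_divisors_prime_pow hp]
  rw [Finset.sum_range_succ _ (k + 1), mul_add]

theorem FPractical.exists_eq_sum {n t : ℕ} (hn : FPractical f n) (ht : t ≤ Sf f n) :
    ∃ D ⊆ n.divisors, t = ∑ d ∈ D, f d := by
  rcases Nat.eq_zero_or_pos t with rfl | htpos
  · exact ⟨∅, Finset.empty_subset _, rfl⟩
  · exact hn.2 t htpos ht

theorem FPractical.Sf_le_of_forall_not_dvd {n M : ℕ} (hn : FPractical f n) (hMn : M ∣ n)
    (hgap : ∀ d ∈ n.divisors, ¬ d ∣ M → Sf f M + 1 < f d) : Sf f n ≤ Sf f M := by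
  by_contra! hlt
  obtain ⟨D, hDn, hD⟩ := hn.2 (Sf f M + 1) (Nat.succ_pos _) hlt
  by_cases hDM : ∀ d ∈ D, d ∣ M
  · have hM : M ≠ 0 := ne_zero_of_dvd_ne_zero hn.1.ne' hMn
    have : ∑ d ∈ D, f d ≤ Sf f M :=
      Finset.sum_le_sum_of_subset fun d hd => Nat.mem_divisors.2 ⟨hDM d hd, hM⟩
    omega
  · push Not at hDM
    obtain ⟨d, hdD, hdM⟩ := hDM
    have : f d ≤ ∑ d ∈ D, f d := Finset.single_le_sum (fun _ _ => Nat.zero_le _) hdD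
    have := hgap d (hDn hdD) hdM
    omega

theorem FPractical.one (hf1 : f 1 = 1) : FPractical f 1 := by
  refine ⟨one_pos, fun t _ ht => ⟨{1}, by simp, ?_⟩⟩
  simp only [Sf, Nat.divisors_one, Finset.sum_singleton, hf1] at ht ⊢
  omega

theorem Nat.exists_eq_add_mul_of_le {A B c t : ℕ} (hc : c ≤ A + 1) (ht : t ≤ A + B * c) :
    ∃ r ≤ A, ∃ v ≤ B, t = r + v * c := by
  induction B with
  | zero => exact ⟨t, by simpa using ht, 0, le_rfl, by simp⟩
  | succ B ih =>
    by_cases htB : t ≤ A + B * c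
    · obtain ⟨r, hr, v, hv, rfl⟩ := ih htB
      exact ⟨r, hr, v, hv.trans B.le_succ, rfl⟩
    · refine ⟨t - (B + 1) * c, ?_, B + 1, le_rfl, ?_⟩ <;>
      · rw [add_mul, one_mul] at ht ⊢
        generalize B * c = x at *
        omega

theorem Nat.not_pow_succ_dvd_mul_pow {p m : ℕ} (hp : p.Prime) (hpm : p.Coprime m) (e : ℕ) :
    ¬ p ^ (e + 1) ∣ m * p ^ e := by
  rw [pow_succ', Nat.mul_dvd_mul_iff_right (pow_pos hp.pos e)]
  exact (Nat.Prime.coprime_iff_not_dvd hp).1 hpm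

theorem FPractical.mul_pow_succ (hf : IsPowMonoMultiplicative f) {p m e : ℕ} (hp : p.Prime)
    (hpm : p.Coprime m) (hm : FPractical f m) (hme : FPractical f (m * p ^ e))
    (hc : f (p ^ (e + 1)) ≤ Sf f (m * p ^ e) + 1) : FPractical f (m * p ^ (e + 1)) := by
  have hn : 0 < m * p ^ (e + 1) := Nat.mul_pos hm.1 (pow_pos hp.pos _)
  refine ⟨hn, fun t _ ht => ?_⟩
  rw [Sf_mul_pow_succ hf.map_mul_of_coprime hp hpm e] at ht
  obtain ⟨r, hr, v, hv, rfl⟩ := Nat.exists_eq_add_mul_of_le hc ht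
  obtain ⟨D₁, hD₁, rfl⟩ := hme.exists_eq_sum hr
  obtain ⟨D₂, hD₂, rfl⟩ := hm.exists_eq_sum hv
  have hdvd₂ : ∀ d ∈ D₂, d ∣ m := fun d hd => Nat.dvd_of_mem_divisors (hD₂ hd)
  refine ⟨D₁ ∪ D₂.image (· * p ^ (e + 1)), Finset.union_subset ?_ ?_, ?_⟩
  · exact hD₁.trans (Nat.divisors_subset_of_dvd hn.ne'
      (mul_dvd_mul_left m (pow_dvd_pow p e.le_succ)))
  · refine Finset.image_subset_iff.2 fun d hd => Nat.mem_divisors.2 ⟨?_, hn.ne'⟩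
    exact mul_dvd_mul (hdvd₂ d hd) dvd_rfl
  · have hdisj : Disjoint D₁ (D₂.image (· * p ^ (e + 1))) := by
      refine Finset.disjoint_right.2 fun x hx hx₁ => ?_
      obtain ⟨d, -, rfl⟩ := Finset.mem_image.1 hx
      exact Nat.not_pow_succ_dvd_mul_pow hp hpm e
        ((dvd_mul_left _ d).trans (Nat.dvd_of_mem_divisors (hD₁ hx₁)))
    rw [Finset.sum_union hdisj, Finset.sum_image fun a _ b _ h =>
      Nat.eq_of_mul_eq_mul_right (pow_pos hp.pos _) h, Finset.sum_mul]
    refine congrArg _ (Finset.sum_congr rfl fun d hd => ?_)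
    exact (hf.map_mul_of_coprime ((hpm.symm.coprime_dvd_left (hdvd₂ d hd)).pow_right _)).symm

theorem FPractical.mul_pow (hf : IsPowMonoMultiplicative f) {p m : ℕ} (hp : p.Prime)
    (hpm : p.Coprime m) (hm : FPractical f m)
    (hbound : ∀ k, f (p ^ (k + 1)) ≤ Sf f (m * p ^ k) + 1) (e : ℕ) :
    FPractical f (m * p ^ e) := by
  induction e with
  | zero => simpa using hm
  | succ e ih => exact hm.mul_pow_succ hf hp hpm ih (hbound e)

theorem prod_map_pow_factorization_eq_self {n : ℕ} {l : List ℕ} (hn : n ≠ 0) (hnd : l.Nodup)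
    (hl : l.toFinset = n.primeFactors) : (l.map fun q => q ^ n.factorization q).prod = n := by
  rw [← List.prod_toFinset _ hnd, hl, ← Nat.prod_primeFactors_pow_factorization hn]

theorem fPractical_prod_take_of_forall (hf : IsPowMonoMultiplicative f)
    (H : ∀ p m : ℕ, p.Prime → 0 < m → Nat.Coprime p m → FPractical f m →
      f p ≤ Sf f m + 1 → ∀ k : ℕ, f (p ^ (k + 1)) ≤ Sf f (m * p ^ k) + 1)
    {l : List ℕ} (e : ℕ → ℕ) (hprime : ∀ q ∈ l, q.Prime) (hnd : l.Nodup)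
    (hl : ∀ (i : ℕ) (hi : i < l.length),
      f l[i] ≤ Sf f ((l.take i).map fun q => q ^ e q).prod + 1) :
    ∀ i ≤ l.length, FPractical f ((l.take i).map fun q => q ^ e q).prod := by
  intro i
  induction i with
  | zero => exact fun _ => by simpa using FPractical.one hf.map_one
  | succ i ih =>
    intro hi
    have hil : i < l.length := hi
    have hP := ih hil.le
    have hs := hprime _ (List.getElem_mem hil)
    have htake := List.take_succ_eq_append_getElem hil
    have hsl : l[i] ∉ l.take i :=
      (List.nodup_append_comm.1 (htake ▸ hnd.sublist (List.take_sublist (i + 1) l))).notMem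
    have hsP : l[i].Coprime ((l.take i).map fun q => q ^ e q).prod := by
      refine Nat.coprime_list_prod_right_iff.2 fun x hx => ?_
      obtain ⟨q, hq, rfl⟩ := List.mem_map.1 hx
      refine Nat.Coprime.pow_right _ ((Nat.coprime_primes hs (hprime q ?_)).2 ?_)
      · exact List.mem_of_mem_take hq
      · rintro rfl
        exact hsl hq
    have hbound := H _ _ hs hP.1 hsP hP (hl i hil)
    rw [htake, List.map_append, List.prod_append]
    simpa using hP.mul_pow hf hs hsP hbound (e l[i])

theorem IsPowMonoMultiplicative.convenient_of_forall (hf : IsPowMonoMultiplicative f)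
    (H : ∀ p m : ℕ, p.Prime → 0 < m → Nat.Coprime p m → FPractical f m →
      f p ≤ Sf f m + 1 → ∀ k : ℕ, f (p ^ (k + 1)) ≤ Sf f (m * p ^ k) + 1) :
    Convenient f := by
  rintro n ⟨hn, l, hnd, hl, -, hlf⟩
  have hprime : ∀ q ∈ l, q.Prime := fun q hq =>
    Nat.prime_of_mem_primeFactors (hl ▸ List.mem_toFinset.2 hq)
  have := fPractical_prod_take_of_forall hf H (fun q => n.factorization q) hprime hnd
    (fun i hi => hlf ⟨i, hi⟩) l.length le_rfl
  rwa [List.take_length, prod_map_pow_factorization_eq_self hn.ne' hnd hl] at this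

theorem List.exists_nodup_toFinset_eq_pairwise {α β : Type*} [DecidableEq α] [LinearOrder β]
    (s : Finset α) (g : α → β) :
    ∃ l : List α, l.Nodup ∧ l.toFinset = s ∧ l.Pairwise fun a b => g a ≤ g b := by
  have hperm := List.mergeSort_perm s.toList fun a b => decide (g a ≤ g b)
  refine ⟨_, hperm.nodup_iff.2 s.nodup_toList, ?_, ?_⟩
  · rw [List.toFinset_eq_of_perm _ _ hperm, Finset.toList_toFinset]
  · refine (List.pairwise_mergeSort (fun a b c hab hbc => ?_) (fun a b => ?_) _).imp ?_
    · simp only [decide_eq_true_eq] at hab hbc ⊢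
      exact hab.trans hbc
    · simpa using le_total (g a) (g b)
    · simp

theorem List.Pairwise.le_of_notMem_take {α β : Type*} [Preorder β] {g : α → β} {l : List α}
    (hl : l.Pairwise fun a b => g a ≤ g b) {i : ℕ} (hi : i < l.length) {x : α} (hx : x ∈ l)
    (hxi : x ∉ l.take i) : g l[i] ≤ g x := by
  rw [← List.take_append_drop i l, List.mem_append, List.drop_eq_getElem_cons hi] at hx
  have hd := List.drop_eq_getElem_cons hi ▸ hl.sublist (List.drop_sublist i l)
  rcases List.mem_cons.1 (hx.resolve_left hxi) with rfl | hx
  · exact le_rfl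
  · exact List.rel_of_pairwise_cons hd hx

theorem Nat.exists_mem_primeFactors_notMem_of_not_dvd {d n : ℕ} {S : Finset ℕ} (hn : n ≠ 0)
    (hdn : d ∣ n) (h : ¬ d ∣ ∏ q ∈ S, q ^ n.factorization q) : ∃ r ∈ d.primeFactors, r ∉ S := by
  by_contra! hS
  have hd : d ≠ 0 := ne_zero_of_dvd_ne_zero hn hdn
  refine h (calc
    d = ∏ q ∈ d.primeFactors, q ^ d.factorization q := Nat.prod_primeFactors_pow_factorization hd
    _ ∣ ∏ q ∈ d.primeFactors, q ^ n.factorization q := Finset.prod_dvd_prod_of_dvd _ _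
        fun q _ => pow_dvd_pow q ((Nat.factorization_le_iff_dvd hd hn).2 hdn q)
    _ ∣ ∏ q ∈ S, q ^ n.factorization q := Finset.prod_dvd_prod_of_subset _ _ _ hS)

theorem FPractical.weaklyFPractical_of_dvd (hf : IsPowMonoMultiplicative f) {m n : ℕ}
    (hm : FPractical f m) (hmn : m ∣ n) (hn : n ≠ 0)
    (hle : ∀ q ∈ n.primeFactors, f q ≤ Sf f m + 1) : WeaklyFPractical f n := by
  obtain ⟨l, hnd, hl, hsorted⟩ := List.exists_nodup_toFinset_eq_pairwise n.primeFactors f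
  refine ⟨Nat.pos_of_ne_zero hn, l, hnd, hl, hsorted, fun i => ?_⟩
  rw [List.get_eq_getElem]
  set P := ((l.take i).map fun p => p ^ n.factorization p).prod
  have hP : P = ∏ q ∈ (l.take i).toFinset, q ^ n.factorization q :=
    (List.prod_toFinset _ (hnd.sublist (List.take_sublist _ _))).symm
  have hPn : P ∣ n := by
    rw [hP]
    conv_rhs => rw [Nat.prod_primeFactors_pow_factorization hn]
    exact Finset.prod_dvd_prod_of_subset _ _ _ fun q hq =>
      hl ▸ List.mem_toFinset.2 (List.mem_of_mem_take (List.mem_toFinset.1 hq))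
  have hP0 : P ≠ 0 := ne_zero_of_dvd_ne_zero hn hPn
  by_contra! hlt
  have hgap : ∀ d ∈ m.divisors, ¬ d ∣ m.gcd P → Sf f (m.gcd P) + 1 < f d := by
    intro d hd hdg
    have hdm := Nat.dvd_of_mem_divisors hd
    obtain ⟨r, hrd, hri⟩ := Nat.exists_mem_primeFactors_notMem_of_not_dvd hn (hdm.trans hmn)
      (hP ▸ fun hdP => hdg (Nat.dvd_gcd hdm hdP))
    have hrn : r ∈ n.primeFactors := Nat.primeFactors_mono (hdm.trans hmn) hn hrd
    calc Sf f (m.gcd P) + 1 ≤ Sf f P + 1 := by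
          gcongr; exact Sf_le_Sf_of_dvd (Nat.gcd_dvd_right m P) hP0
      _ < f l[i] := hlt
      _ ≤ f r := hsorted.le_of_notMem_take i.2 (List.mem_toFinset.1 (hl ▸ hrn))
          fun h => hri (List.mem_toFinset.2 h)
      _ ≤ f d := hf.le_of_dvd (Nat.prime_of_mem_primeFactors hrd)
          (Nat.pos_of_mem_divisors hd).ne' (Nat.dvd_of_mem_primeFactors hrd)
  have hSm := hm.Sf_le_of_forall_not_dvd (Nat.gcd_dvd_left m P) hgap
  have hSgcd := Sf_le_Sf_of_dvd (f := f) (Nat.gcd_dvd_right m P) hP0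
  have hfi := hle l[(i : ℕ)] (hl ▸ List.mem_toFinset.2 (List.getElem_mem i.2))
  omega

theorem Nat.pow_dvd_of_dvd_mul_pow_succ {p m d k : ℕ} (hp : p.Prime)
    (hd : d ∣ m * p ^ (k + 1)) (hdk : ¬ d ∣ m * p ^ k) : p ^ (k + 1) ∣ d := by
  obtain ⟨d₁, d₂, hd₁, hd₂, rfl⟩ := Nat.dvd_mul.1 hd
  obtain ⟨j, hj, rfl⟩ := (Nat.dvd_prime_pow hp).1 hd₂
  obtain hjk | rfl : j ≤ k ∨ j = k + 1 := by omega
  · exact absurd (mul_dvd_mul hd₁ (pow_dvd_pow p hjk)) hdk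
  · exact dvd_mul_left _ _

theorem IsPowMonoMultiplicative.le_Sf_mul_pow_of_convenient (hf : IsPowMonoMultiplicative f)
    (hconv : Convenient f) {p m : ℕ} (hp : p.Prime) (hpm : p.Coprime m) (hm : FPractical f m)
    (hfp : f p ≤ Sf f m + 1) (k : ℕ) : f (p ^ (k + 1)) ≤ Sf f (m * p ^ k) + 1 := by
  by_contra! hlt
  have hm0 : m ≠ 0 := hm.1.ne'
  have hn : m * p ^ (k + 1) ≠ 0 := mul_ne_zero hm0 (pow_ne_zero _ hp.ne_zero)
  have hweak : WeaklyFPractical f (m * p ^ (k + 1)) := by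
    refine hm.weaklyFPractical_of_dvd hf (dvd_mul_right m _) hn fun q hq => ?_
    rw [Nat.primeFactors_mul hm0 (pow_ne_zero _ hp.ne_zero),
      Nat.primeFactors_prime_pow k.succ_ne_zero hp, Finset.mem_union,
      Finset.mem_singleton] at hq
    rcases hq with hq | rfl
    · exact (le_Sf_of_dvd (Nat.dvd_of_mem_primeFactors hq) hm0).trans (Nat.le_succ _)
    · exact hfp
  have hgap : ∀ d ∈ (m * p ^ (k + 1)).divisors, ¬ d ∣ m * p ^ k →
      Sf f (m * p ^ k) + 1 < f d := fun d hd hdk =>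
    hlt.trans_le (hf.pow_le_of_pow_dvd hp (Nat.pos_of_mem_divisors hd).ne'
      (Nat.pow_dvd_of_dvd_mul_pow_succ hp (Nat.dvd_of_mem_divisors hd) hdk))
  have hSf := (hconv _ hweak).Sf_le_of_forall_not_dvd
    (mul_dvd_mul_left m (pow_dvd_pow p k.le_succ)) hgap
  rw [Sf_mul_pow_succ hf.map_mul_of_coprime hp hpm k] at hSf
  have hSm : 0 < Sf f m := (hf.pos one_ne_zero).trans_le (le_Sf_of_dvd (one_dvd m) hm0)
  have hnew := Nat.mul_pos hSm (hf.pos_pow hp (k + 1))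
  omega

end

/-- f is convenient iff for every prime p and every f-practical m coprime to p,
f(p) ≤ S_f(m) + 1 implies f(p^(k+1)) ≤ S_f(m * p^k) + 1 for all k ≥ 0. -/
theorem stmt6 (f : ℕ → ℕ) (hf1 : f 1 = 1)
    (hmul : ∀ a b : ℕ, Nat.Coprime a b → f (a * b) = f a * f b)
    (hmono : ∀ p k : ℕ, p.Prime → 1 ≤ k → f (p ^ (k - 1)) ≤ f (p ^ k)) :
    Convenient f ↔
      ∀ p m : ℕ, p.Prime → 0 < m → Nat.Coprime p m → FPractical f m →
        f p ≤ Sf f m + 1 → ∀ k : ℕ, f (p ^ (k + 1)) ≤ Sf f (m * p ^ k) + 1 := by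
  have hf : IsPowMonoMultiplicative f :=
    ⟨hf1, hmul _ _, fun hp => monotone_nat_of_le_succ fun k => hmono _ (k + 1) hp k.succ_pos⟩
  exact ⟨fun hconv p m hp _ hpm hm hfp => hf.le_Sf_mul_pow_of_convenient hconv hp hpm hm hfp,
    hf.convenient_of_forall⟩
end

section
/- Every λ*-practical number is λ-practical. That is, if n is a positive integer such that every positive integer m ≤ S_λ(n) can be written as ∑_{d ∈ D} λ(d) for some set D of distinct divisors of n, then for every positive integer m ≤ n there exist integers m_d (for d | n) with 0 ≤ m_d ≤ φ(d)/λ(d) and m = ∑_{d | n} λ(d)·m_d. -/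
open Finset

/-- The Carmichael function: the least positive k such that a^k ≡ 1 (mod n) for all a
coprime to n. -/
noncomputable def carmichael (n : ℕ) : ℕ :=
  sInf {k : ℕ | 0 < k ∧ ∀ a : ℕ, Nat.Coprime a n → a ^ k ≡ 1 [MOD n]}

/-! For `d ≠ 0`, `λ d = carmichael d` is the exponent of `(ZMod d)ˣ`, so it divides `φ d`.
Hence the bounds `q d = φ d / λ d` are at least `1`, and
`∑_{d ∣ n} λ d * q d = ∑_{d ∣ n} φ d = n`. Combinations with multiplicities at most
`min (q d) k` reach every `m ≤ ∑ λ d * min (q d) k`, by induction on `k`: for `k = 1` this is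
λ*-practicality, and raising `k` adds a layer of weight at most `∑ λ d`, which keeps the set of
reachable numbers an interval. -/

lemma forall_pow_modEq_one_iff_forall_units_pow_eq_one {d : ℕ} [NeZero d] (k : ℕ) :
    (∀ a : ℕ, a.Coprime d → a ^ k ≡ 1 [MOD d]) ↔ ∀ u : (ZMod d)ˣ, u ^ k = 1 := by
  constructor
  · intro h u
    have hcast := (ZMod.natCast_eq_natCast_iff _ _ _).mpr (h _ (ZMod.val_coe_unit_coprime u))
    push_cast [ZMod.natCast_zmod_val] at hcast
    exact Units.ext (by simpa using hcast)
  · intro h a ha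
    rw [← ZMod.natCast_eq_natCast_iff]
    simpa using congrArg Units.val (h (ZMod.unitOfCoprime a ha))

lemma carmichael_eq_exponent {d : ℕ} [NeZero d] : carmichael d = Monoid.exponent (ZMod d)ˣ := by
  simp only [carmichael, Monoid.exponent_eq_sInf,
    forall_pow_modEq_one_iff_forall_units_pow_eq_one]

lemma carmichael_dvd_totient {d : ℕ} (hd : d ≠ 0) : carmichael d ∣ d.totient := by
  have : NeZero d := ⟨hd⟩
  rw [carmichael_eq_exponent, ← ArithmeticFunction.carmichael_eq_exponent hd]
  exact ArithmeticFunction.carmichael_dvd_totient d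

lemma one_le_totient_div_carmichael {d : ℕ} (hd : d ≠ 0) : 1 ≤ d.totient / carmichael d := by
  have htotient : 0 < d.totient := Nat.totient_pos.mpr (Nat.pos_of_ne_zero hd)
  exact Nat.div_pos (Nat.le_of_dvd htotient (carmichael_dvd_totient hd))
    (Nat.pos_of_dvd_of_pos (carmichael_dvd_totient hd) htotient)

def IsBoundedCombination {ι : Type*} (D : Finset ι) (f q : ι → ℕ) (m : ℕ) : Prop :=
  ∃ c : ι → ℕ, (∀ d ∈ D, c d ≤ q d) ∧ m = ∑ d ∈ D, f d * c d

namespace IsBoundedCombination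

variable {ι : Type*} {D : Finset ι} {f q q' : ι → ℕ}

lemma zero : IsBoundedCombination D f q 0 :=
  ⟨0, fun _ _ => Nat.zero_le _, by simp⟩

lemma of_subset [DecidableEq ι] {D' : Finset ι} (hD' : D' ⊆ D) :
    IsBoundedCombination D f 1 (∑ d ∈ D', f d) := by
  refine ⟨fun d => if d ∈ D' then 1 else 0, fun d _ => by by_cases d ∈ D' <;> simp [*], ?_⟩
  simp only [mul_ite, mul_one, mul_zero, sum_ite_mem, inter_eq_right.mpr hD']

lemma mono {m : ℕ} (h : IsBoundedCombination D f q m) (hq : ∀ d ∈ D, q d ≤ q' d) :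
    IsBoundedCombination D f q' m :=
  let ⟨c, hc, hm⟩ := h
  ⟨c, fun d hd => (hc d hd).trans (hq d hd), hm⟩

lemma extend {e : ι → ℕ} {S : ℕ} (h : ∀ m ≤ S, IsBoundedCombination D f q m)
    (hq' : ∀ d ∈ D, q d + e d ≤ q' d) (he : ∑ d ∈ D, f d * e d ≤ S + 1) :
    ∀ m ≤ S + ∑ d ∈ D, f d * e d, IsBoundedCombination D f q' m := by
  intro m hm
  by_cases hlarge : ∑ d ∈ D, f d * e d ≤ m
  · obtain ⟨c, hc, hsum⟩ := h (m - ∑ d ∈ D, f d * e d) (by omega)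
    refine ⟨c + e, fun d hd => (Nat.add_le_add_right (hc d hd) _).trans (hq' d hd), ?_⟩
    simp only [Pi.add_apply, mul_add, sum_add_distrib, ← hsum]
    omega
  · exact (h m (by omega)).mono fun d hd => Nat.le_of_add_right_le (hq' d hd)

lemma of_le_sum_mul_min (hq : ∀ d ∈ D, 1 ≤ q d)
    (h : ∀ m ≤ ∑ d ∈ D, f d, IsBoundedCombination D f 1 m) {k : ℕ} (hk : 1 ≤ k) :
    ∀ m ≤ ∑ d ∈ D, f d * min (q d) k,
      IsBoundedCombination D f (fun d => min (q d) k) m := by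
  induction k, hk using Nat.le_induction with
  | base =>
    have hmin : ∀ d ∈ D, min (q d) 1 = 1 := fun d hd => min_eq_right (hq d hd)
    intro m hm
    rw [sum_congr rfl fun d hd => by rw [hmin d hd, mul_one]] at hm
    exact (h m hm).mono fun d hd => (hmin d hd).ge
  | succ k hk ih =>
    have hlayer : ∀ d ∈ D, min (q d) (k + 1) - min (q d) k ≤ min (q d) k := fun d hd => by
      have := hq d hd
      omega
    have htotal : ∑ d ∈ D, f d * min (q d) (k + 1) = ∑ d ∈ D, f d * min (q d) k +
        ∑ d ∈ D, f d * (min (q d) (k + 1) - min (q d) k) := by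
      rw [← sum_add_distrib]
      refine sum_congr rfl fun d _ => ?_
      rw [← mul_add]
      congr 1
      omega
    rw [htotal]
    exact extend ih (fun d _ => by omega)
      ((sum_le_sum fun d hd => Nat.mul_le_mul_left _ (hlayer d hd)).trans (Nat.le_succ _))

theorem of_le_sum_mul (hq : ∀ d ∈ D, 1 ≤ q d)
    (h : ∀ m ≤ ∑ d ∈ D, f d, IsBoundedCombination D f 1 m) {m : ℕ}
    (hm : m ≤ ∑ d ∈ D, f d * q d) : IsBoundedCombination D f q m := by
  have hK : ∀ d ∈ D, q d ≤ ∑ d ∈ D, q d + 1 := fun d hd =>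
    (single_le_sum (fun _ _ => Nat.zero_le _) hd).trans (Nat.le_succ _)
  have hm' : m ≤ ∑ d ∈ D, f d * min (q d) (∑ d ∈ D, q d + 1) :=
    hm.trans (sum_le_sum fun d hd => Nat.mul_le_mul_left _ (min_eq_left (hK d hd)).ge)
  exact (of_le_sum_mul_min hq h le_add_self m hm').mono fun d _ => min_le_left _ _

end IsBoundedCombination

/-- Every λ*-practical number is λ-practical. -/
theorem stmt15 (n : ℕ) (hn : FPractical carmichael n) :
    ∀ m : ℕ, 0 < m → m ≤ n →
      ∃ c : ℕ → ℕ, (∀ d ∈ n.divisors, c d ≤ Nat.totient d / carmichael d) ∧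
        m = ∑ d ∈ n.divisors, carmichael d * c d := by
  obtain ⟨-, hsubset⟩ := hn
  intro m _ hmn
  have hne : ∀ d ∈ n.divisors, d ≠ 0 := fun d hd => (Nat.pos_of_mem_divisors hd).ne'
  refine IsBoundedCombination.of_le_sum_mul
    (fun d hd => one_le_totient_div_carmichael (hne d hd)) (fun k hk => ?_) ?_
  · rcases k.eq_zero_or_pos with rfl | hk0
    · exact .zero
    · obtain ⟨D, hD, rfl⟩ := hsubset k hk0 hk
      exact .of_subset hD
  · rwa [sum_congr rfl fun d hd => Nat.mul_div_cancel' (carmichael_dvd_totient (hne d hd)),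
      Nat.sum_totient]
end
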